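/- arXiv:math/0508332 — 7 statements merged into one kernel-verified Lean document; each statement's English description precedes it below -/
import Mathlib

section
/- Let u₁,…,u_m be variables with deg(u_i) = i, and let r ≥ 1. Then any monomial U = ∏ u_i^{c_i} with deg(U) ≥ (r + m − 1)·lcm(2,…,m) can be written as U = U₁·U₂ where U₁ is a monomial in the u_i with deg(U₁) = r·lcm(2,…,m). -/
/-!
Write `deg c = w ⬝ᵥ c` for the weighted degree, and suppose every weight divides `L`.
If `deg c > n (L - 1)`, where `n` is the number of variables, then by pigeonhole some
variable satisfies `w i * c i ≥ L`, and since `w i ∣ L` the monomial `u_i ^ (L / w i)` is a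
factor of degree exactly `L`. Peeling off such factors one at a time, each step lowers the
degree by `L`, so `deg c > (r - 1) L + n (L - 1)` yields a factor of degree `r L`.
For `u_i` of degree `i` the weights divide `lcm(2, …, m)`, and
`(r + m - 1) L > (r - 1) L + m (L - 1)`.
-/

open Matrix

section WeightedDegree

variable {ι : Type*} [Fintype ι] [DecidableEq ι] {w : ι → ℕ} {L : ℕ}

theorem exists_add_eq_dotProduct_eq (hw : ∀ i, w i ∣ L) {c : ι → ℕ}
    (hc : Fintype.card ι * (L - 1) < w ⬝ᵥ c) :
    ∃ d e : ι → ℕ, d + e = c ∧ w ⬝ᵥ d = L := by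
  have hsum : ∑ _i : ι, (L - 1) < ∑ i, w i * c i := by simpa [dotProduct] using hc
  obtain ⟨i, -, hi⟩ := Finset.exists_lt_of_sum_lt hsum
  have hdiv : L / w i ≤ c i := Nat.div_le_of_le_mul (by omega)
  refine ⟨Pi.single i (L / w i), c - Pi.single i (L / w i), ?_, ?_⟩
  · funext j
    obtain rfl | hj := eq_or_ne j i
    · simpa using Nat.add_sub_of_le hdiv
    · simp [hj]
  · rw [dotProduct_single, Nat.mul_div_cancel' (hw i)]

theorem exists_add_eq_dotProduct_eq_succ_mul (hw : ∀ i, w i ∣ L) (r : ℕ) {c : ι → ℕ}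
    (hc : r * L + Fintype.card ι * (L - 1) < w ⬝ᵥ c) :
    ∃ d e : ι → ℕ, d + e = c ∧ w ⬝ᵥ d = (r + 1) * L := by
  induction r generalizing c with
  | zero => simpa using exists_add_eq_dotProduct_eq hw (c := c) (by omega)
  | succ r ih =>
    obtain ⟨d₀, e₀, rfl, hd₀⟩ := exists_add_eq_dotProduct_eq hw (c := c) (by
      rw [add_mul] at hc; omega)
    have he₀ : r * L + Fintype.card ι * (L - 1) < w ⬝ᵥ e₀ := by
      rw [dotProduct_add, hd₀, add_mul] at hc; omega
    obtain ⟨d₁, e₁, rfl, hd₁⟩ := ih he₀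
    exact ⟨d₀ + d₁, e₁, by rw [add_assoc], by rw [dotProduct_add, hd₀, hd₁]; ring⟩

end WeightedDegree

theorem succ_dvd_lcm_Icc_two {m i : ℕ} (hi : i < m) : i + 1 ∣ (Finset.Icc 2 m).lcm id := by
  obtain rfl | hi₀ := eq_or_ne i 0
  · exact one_dvd _
  · exact Finset.dvd_lcm (Finset.mem_Icc.mpr ⟨by omega, hi⟩)

theorem lcm_Icc_two_pos (m : ℕ) : 0 < (Finset.Icc 2 m).lcm id := by
  refine Nat.pos_of_ne_zero fun h => ?_
  obtain ⟨x, hx, hx₀⟩ := Finset.lcm_eq_zero_iff.mp h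
  simp only [Finset.mem_Icc, id] at hx hx₀
  omega

/-- Monomial factorization: with variables `u₁,…,u_m` of degrees `deg u_i = i`
(encoded by exponent vectors `c : Fin m → ℕ`, `deg c = ∑ i·c_i`), any monomial of
degree at least `(r + m − 1)·lcm(2,…,m)` factors as `U₁·U₂` (i.e. `c = d + e`
componentwise) with `deg U₁ = r·lcm(2,…,m)`. -/
theorem stmt_2 (m r : ℕ) (hm : 1 ≤ m) (hr : 1 ≤ r)
    (L : ℕ) (hL : L = (Finset.Icc 2 m).lcm id)
    (c : Fin m → ℕ)
    (h : (r + m - 1) * L ≤ ∑ i : Fin m, ((i : ℕ) + 1) * c i) :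
    ∃ d e : Fin m → ℕ, (∀ i, d i + e i = c i) ∧
      ∑ i : Fin m, ((i : ℕ) + 1) * d i = r * L := by
  obtain ⟨s, rfl⟩ := Nat.exists_eq_add_of_le' hr
  have hw : ∀ i : Fin m, (i : ℕ) + 1 ∣ L := fun i => hL ▸ succ_dvd_lcm_Icc_two i.isLt
  have hL₀ : 0 < L := hL ▸ lcm_Icc_two_pos m
  have hmL : m * (L - 1) < m * L := Nat.mul_lt_mul_of_pos_left (by omega) hm
  have hc : s * L + Fintype.card (Fin m) * (L - 1) < (fun i : Fin m => (i : ℕ) + 1) ⬝ᵥ c := by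
    rw [Fintype.card_fin]
    rw [show s + 1 + m - 1 = s + m by omega, add_mul] at h
    exact lt_of_lt_of_le (by omega) h
  obtain ⟨d, e, rfl, hd⟩ := exists_add_eq_dotProduct_eq_succ_mul hw s hc
  exact ⟨d, e, fun _ => rfl, hd⟩
end

section
/- Let k be a field of characteristic zero, R = k[[x₁,…,xₙ]] with maximal ideal 𝔪, B ⊆ 𝔪 an ideal, and I ⊆ R an ideal. If B·D(I) ⊆ I, then B^j·D^j(I) ⊆ I for every j ≥ 1, where D(I) is the ideal generated by I together with all partial derivatives ∂f/∂x_i for f ∈ I, and D^{j+1}(I) = D(D^j(I)). -/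
section Aux
variable {k R : Type*} [CommRing k] [CommRing R] [Algebra k R]

/-- Product rule, ideal form: `D(P·Q) ⊆ D(P)·Q + P·D(Q)`. -/
lemma spanDer_mul_le (d : Derivation k R R) (P Q : Ideal R) :
    Ideal.span (⇑d '' ((P * Q : Ideal R) : Set R)) ≤
      Ideal.span (⇑d '' (P : Set R)) * Q + P * Ideal.span (⇑d '' (Q : Set R)) := by
  rw [Ideal.span_le]
  rintro _ ⟨y, hy, rfl⟩
  refine Submodule.mul_induction_on hy (fun p hp q hq => ?_) (fun a b ha hb => ?_)
  · rw [Derivation.leibniz]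
    have h1 : d q ∈ Ideal.span (⇑d '' (Q : Set R)) :=
      Ideal.subset_span (Set.mem_image_of_mem _ hq)
    have h2 : d p ∈ Ideal.span (⇑d '' (P : Set R)) :=
      Ideal.subset_span (Set.mem_image_of_mem _ hp)
    refine add_mem (Ideal.mem_sup_right (Ideal.mul_mem_mul hp h1)) (Ideal.mem_sup_left ?_)
    rw [smul_eq_mul, mul_comm q (d p)]
    exact Ideal.mul_mem_mul h2 hq
  · rw [map_add]; exact add_mem ha hb

/-- Reversed product rule, ideal form: `P·D(Q) ⊆ D(P·Q) + D(P)·Q`. -/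
lemma mul_spanDer_le (d : Derivation k R R) (P Q : Ideal R) :
    P * Ideal.span (⇑d '' (Q : Set R)) ≤
      Ideal.span (⇑d '' ((P * Q : Ideal R) : Set R)) +
        Ideal.span (⇑d '' (P : Set R)) * Q := by
  rw [Ideal.mul_le]
  intro p hp y hy
  induction hy using Submodule.span_induction with
  | mem x hx =>
      obtain ⟨q, hq, rfl⟩ := hx
      have key : p * d q = d (p * q) - q * d p := by
        rw [Derivation.leibniz, smul_eq_mul, smul_eq_mul]; ring
      rw [key]
      have h1 : d (p * q) ∈ Ideal.span (⇑d '' ((P * Q : Ideal R) : Set R)) :=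
        Ideal.subset_span (Set.mem_image_of_mem _ (Ideal.mul_mem_mul hp hq))
      have h2 : d p ∈ Ideal.span (⇑d '' (P : Set R)) :=
        Ideal.subset_span (Set.mem_image_of_mem _ hp)
      refine sub_mem (Ideal.mem_sup_left h1) (Ideal.mem_sup_right ?_)
      rw [mul_comm q (d p)]
      exact Ideal.mul_mem_mul h2 hq
  | zero => simpa using (zero_mem _)
  | add a b _ _ ha hb => rw [mul_add]; exact add_mem ha hb
  | smul r x _ hx => rw [smul_eq_mul, mul_left_comm]; exact Ideal.mul_mem_left _ _ hx

/-- `D(B^{m+1}) ⊆ D(B)·B^m`. -/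
lemma spanDer_pow_le (d : Derivation k R R) (B : Ideal R) :
    ∀ m : ℕ, Ideal.span (⇑d '' ((B ^ (m + 1) : Ideal R) : Set R)) ≤
      Ideal.span (⇑d '' (B : Set R)) * B ^ m := by
  intro m
  induction m with
  | zero => simpa using le_refl _
  | succ m ih =>
      calc Ideal.span (⇑d '' ((B ^ (m + 2) : Ideal R) : Set R))
          = Ideal.span (⇑d '' ((B * B ^ (m + 1) : Ideal R) : Set R)) := by
            rw [← pow_succ']
        _ ≤ Ideal.span (⇑d '' (B : Set R)) * B ^ (m + 1) +
              B * Ideal.span (⇑d '' ((B ^ (m + 1) : Ideal R) : Set R)) :=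
            spanDer_mul_le d B (B ^ (m + 1))
        _ ≤ Ideal.span (⇑d '' (B : Set R)) * B ^ (m + 1) +
              B * (Ideal.span (⇑d '' (B : Set R)) * B ^ m) :=
            add_le_add le_rfl (Ideal.mul_mono_right ih)
        _ = Ideal.span (⇑d '' (B : Set R)) * B ^ (m + 1) := by
            rw [mul_left_comm, ← pow_succ']
            exact sup_idem _

end Aux


/-- The derivative ideal of `I ⊆ k[[x₁,…,xₙ]]`: the ideal generated by `I`
together with all derivatives of elements of `I`.  (Over a field of
characteristic zero, every `k`-derivation of `k[[x₁,…,xₙ]]` is an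
`R`-combination of the partials `∂/∂xᵢ`, so this agrees with the ideal
generated by `I` and the partial derivatives `∂f/∂xᵢ`, `f ∈ I`.) -/
noncomputable def derIdeal {k : Type*} [Field k] {n : ℕ}
    (I : Ideal (MvPowerSeries (Fin n) k)) : Ideal (MvPowerSeries (Fin n) k) :=
  I ⊔ ⨆ d : Derivation k (MvPowerSeries (Fin n) k) (MvPowerSeries (Fin n) k),
        Ideal.span (⇑d '' (I : Set (MvPowerSeries (Fin n) k)))

set_option maxHeartbeats 1000000 in
/-- Let `k` be a field of characteristic zero, `R = k[[x₁,…,xₙ]]` with maximal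
ideal `𝔪`, `B ⊆ 𝔪` and `I` ideals.  If `B·D(I) ⊆ I` then `B^j·D^j(I) ⊆ I` for
every `j ≥ 1`. -/
theorem stmt_5 {k : Type*} [Field k] [CharZero k] (n : ℕ)
    (B I : Ideal (MvPowerSeries (Fin n) k))
    (hB : B ≤ RingHom.ker (MvPowerSeries.constantCoeff : MvPowerSeries (Fin n) k →+* k))
    (h : B * derIdeal I ≤ I) :
    ∀ j : ℕ, 1 ≤ j → B ^ j * derIdeal^[j] I ≤ I := by
  intro j hj
  induction j, hj using Nat.le_induction with
  | base => simpa [pow_one] using h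
  | succ j hj ih =>
      obtain ⟨m, rfl⟩ := Nat.exists_eq_add_of_le hj
      set J := derIdeal^[1 + m] I with hJ
      rw [Function.iterate_succ_apply', ← hJ]
      show B ^ (1 + m + 1) * derIdeal J ≤ I
      rw [derIdeal, Ideal.mul_sup]
      refine sup_le ?_ ?_
      · calc B ^ (1 + m + 1) * J = B * (B ^ (1 + m) * J) := by ring
          _ ≤ B ^ (1 + m) * J := Ideal.mul_le_right
          _ ≤ I := ih
      · rw [Submodule.mul_iSup]
        refine iSup_le fun d => ?_
        have expand : B ^ (1 + m + 1) * Ideal.span (⇑d '' (J : Set _)) =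
            B * (B ^ (1 + m) * Ideal.span (⇑d '' (J : Set _))) := by ring
        rw [expand]
        calc B * (B ^ (1 + m) * Ideal.span (⇑d '' (J : Set _)))
            ≤ B * (Ideal.span (⇑d '' ((B ^ (1 + m) * J : Ideal _) : Set _)) +
                Ideal.span (⇑d '' ((B ^ (1 + m) : Ideal _) : Set _)) * J) :=
              Ideal.mul_mono_right (mul_spanDer_le d _ J)
          _ = B * Ideal.span (⇑d '' ((B ^ (1 + m) * J : Ideal _) : Set _)) +
                B * (Ideal.span (⇑d '' ((B ^ (1 + m) : Ideal _) : Set _)) * J) := by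
              rw [mul_add]
          _ ≤ I := by
              refine sup_le ?_ ?_
              · refine le_trans (Ideal.mul_mono_right ?_) h
                refine le_trans (Ideal.span_mono (Set.image_mono ih)) ?_
                refine le_trans (le_iSup
                  (fun d : Derivation k (MvPowerSeries (Fin n) k) (MvPowerSeries (Fin n) k) =>
                    Ideal.span (⇑d '' (I : Set (MvPowerSeries (Fin n) k)))) d) ?_
                rw [derIdeal]
                exact le_sup_right
              · calc B * (Ideal.span (⇑d '' ((B ^ (1 + m) : Ideal _) : Set _)) * J)
                    ≤ B * (Ideal.span (⇑d '' (B : Set _)) * B ^ m * J) := by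
                      refine Ideal.mul_mono_right (Ideal.mul_mono_left ?_)
                      simpa [add_comm] using spanDer_pow_le d B m
                  _ = Ideal.span (⇑d '' (B : Set _)) * (B ^ (1 + m) * J) := by ring
                  _ ≤ Ideal.span (⇑d '' (B : Set _)) * I := Ideal.mul_mono_right ih
                  _ ≤ I := Ideal.mul_le_right
end

section
/- Let R be a commutative ring containing ℚ, and let d: R → R be a derivation. For ideals I, J ⊆ R, define D(I) := I + d(I)·R (the ideal generated by I and d(I)). Then the product rule for derivative ideals holds: D^r(I·J) ⊆ Σ_{i=0}^{r} D^i(I)·D^{r−i}(J), where D^0(I) = I and D^{i+1}(I) = D(D^i(I)). -/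
/-- For a derivation `d : R → R`, `D(I)` is the ideal generated by `I` and
`d(I)`. -/
def derivIdeal {R : Type*} [CommRing R] (d : R →+ R) (I : Ideal R) : Ideal R :=
  I ⊔ Ideal.span (⇑d '' (I : Set R))

lemma derivIdeal_mono {R : Type*} [CommRing R] (d : R →+ R) {I J : Ideal R}
    (h : I ≤ J) : derivIdeal d I ≤ derivIdeal d J :=
  sup_le_sup h (Ideal.span_mono (Set.image_mono h))

lemma le_derivIdeal {R : Type*} [CommRing R] (d : R →+ R) (I : Ideal R) :
    I ≤ derivIdeal d I := le_sup_left

lemma d_mem_derivIdeal {R : Type*} [CommRing R] (d : R →+ R) {I : Ideal R} {x : R}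
    (hx : x ∈ I) : d x ∈ derivIdeal d I :=
  le_sup_right (α := Ideal R) (Ideal.subset_span ⟨x, hx, rfl⟩)

lemma derivIdeal_mul_le {R : Type*} [CommRing R] (d : R →+ R)
    (hd : ∀ a b : R, d (a * b) = a * d b + b * d a) (I J : Ideal R) :
    derivIdeal d (I * J) ≤ derivIdeal d I * J + I * derivIdeal d J := by
  apply sup_le
  · calc I * J ≤ derivIdeal d I * J := Ideal.mul_mono_left (le_derivIdeal d I)
    _ ≤ _ := le_sup_left
  · rw [Ideal.span_le]
    rintro _ ⟨x, hx, rfl⟩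
    refine Submodule.mul_induction_on hx (fun a ha b hb => ?_) (fun x y hx hy => ?_)
    · rw [SetLike.mem_coe, hd a b, mul_comm b (d a)]
      exact Submodule.add_mem _
        (Submodule.mem_sup_right (Ideal.mul_mem_mul ha (d_mem_derivIdeal d hb)))
        (Submodule.mem_sup_left (Ideal.mul_mem_mul (d_mem_derivIdeal d ha) hb))
    · rw [SetLike.mem_coe, map_add]
      exact Submodule.add_mem _ hx hy

lemma derivIdeal_add_le {R : Type*} [CommRing R] (d : R →+ R) (I J : Ideal R) :
    derivIdeal d (I + J) ≤ derivIdeal d I + derivIdeal d J := by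
  apply sup_le
  · exact add_le_add (le_derivIdeal d I) (le_derivIdeal d J)
  · rw [Ideal.span_le]
    rintro _ ⟨x, hx, rfl⟩
    rw [SetLike.mem_coe, Submodule.add_eq_sup, Submodule.mem_sup] at hx
    obtain ⟨a, ha, b, hb, rfl⟩ := hx
    rw [SetLike.mem_coe, map_add]
    exact Submodule.add_mem _ (Submodule.mem_sup_left (d_mem_derivIdeal d ha))
      (Submodule.mem_sup_right (d_mem_derivIdeal d hb))

lemma derivIdeal_sum_le {R : Type*} [CommRing R] (d : R →+ R) {ι : Type*}
    (s : Finset ι) (f : ι → Ideal R) :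
    derivIdeal d (∑ i ∈ s, f i) ≤ ∑ i ∈ s, derivIdeal d (f i) := by
  classical
  induction s using Finset.induction with
  | empty =>
      simp only [Finset.sum_empty]
      apply sup_le le_rfl
      rw [Ideal.span_le]
      rintro _ ⟨x, hx, rfl⟩
      obtain rfl : x = 0 := by simpa using hx
      simp
  | @insert a s h ih =>
      rw [Finset.sum_insert h, Finset.sum_insert h]
      exact (derivIdeal_add_le d _ _).trans (add_le_add le_rfl ih)

lemma idealSum_le {R : Type*} [CommRing R] {ι : Type*} {s : Finset ι}
    {f : ι → Ideal R} {T : Ideal R} (h : ∀ i ∈ s, f i ≤ T) :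
    (∑ i ∈ s, f i) ≤ T := by
  classical
  induction s using Finset.induction with
  | empty => simp
  | @insert a s hn ih =>
      rw [Finset.sum_insert hn]
      exact sup_le (h _ (Finset.mem_insert_self _ _))
        (ih fun i hi => h i (Finset.mem_insert_of_mem hi))

/-- Product rule for derivative ideals: for a commutative ring `R` containing
`ℚ`, a derivation `d : R → R` and ideals `I, J`,
`D^r(I·J) ⊆ ∑_{i=0}^r D^i(I)·D^{r−i}(J)`. -/
theorem stmt_6 {R : Type*} [CommRing R] [Algebra ℚ R]
    (d : R →+ R) (hd : ∀ a b : R, d (a * b) = a * d b + b * d a)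
    (I J : Ideal R) (r : ℕ) :
    (derivIdeal d)^[r] (I * J)
      ≤ ∑ i ∈ Finset.range (r + 1), (derivIdeal d)^[i] I * (derivIdeal d)^[r - i] J := by
  induction r with
  | zero => simp
  | succ r ih =>
      rw [Function.iterate_succ_apply']
      calc derivIdeal d ((derivIdeal d)^[r] (I * J))
          ≤ derivIdeal d (∑ i ∈ Finset.range (r + 1),
              (derivIdeal d)^[i] I * (derivIdeal d)^[r - i] J) := derivIdeal_mono d ih
        _ ≤ ∑ i ∈ Finset.range (r + 1),
              derivIdeal d ((derivIdeal d)^[i] I * (derivIdeal d)^[r - i] J) :=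
            derivIdeal_sum_le d _ _
        _ ≤ ∑ i ∈ Finset.range (r + 2),
              (derivIdeal d)^[i] I * (derivIdeal d)^[r + 1 - i] J := by
            apply idealSum_le
            intro i hi
            rw [Finset.mem_range] at hi
            have hi' : i ≤ r := Nat.lt_succ_iff.mp hi
            calc derivIdeal d ((derivIdeal d)^[i] I * (derivIdeal d)^[r - i] J)
                ≤ derivIdeal d ((derivIdeal d)^[i] I) * (derivIdeal d)^[r - i] J
                  + (derivIdeal d)^[i] I * derivIdeal d ((derivIdeal d)^[r - i] J) :=
                  derivIdeal_mul_le d hd _ _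
              _ = (derivIdeal d)^[i + 1] I * (derivIdeal d)^[r - i] J
                  + (derivIdeal d)^[i] I * (derivIdeal d)^[r - i + 1] J := by
                  rw [Function.iterate_succ_apply', Function.iterate_succ_apply']
              _ ≤ _ := by
                  rw [Submodule.add_eq_sup]
                  apply sup_le
                  · have h1 : r + 1 - (i + 1) = r - i := by omega
                    have := Finset.single_le_sum
                      (f := fun k => (derivIdeal d)^[k] I * (derivIdeal d)^[r + 1 - k] J)
                      (fun k _ => bot_le) (Finset.mem_range.mpr (by omega : i + 1 < r + 2))
                    simpa only [h1] using this
                  · have h2 : r + 1 - i = r - i + 1 := by omega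
                    have := Finset.single_le_sum
                      (f := fun k => (derivIdeal d)^[k] I * (derivIdeal d)^[r + 1 - k] J)
                      (fun k _ => bot_le) (Finset.mem_range.mpr (by omega : i < r + 2))
                    simpa only [h2] using this
end

section
/- Order does not increase under blow-up of a maximal-order center (local model): let k be a field, f ∈ k[x₁,…,xₙ] with ord₀(f) = m equal to the maximal order of the ideal. Blow up Z = (x₁ = ⋯ = x_r = 0) and consider the chart y₁ = x₁/x_r,…, y_{r−1} = x_{r−1}/x_r, y_r = x_r,…, yₙ = xₙ. Then the birational transform f̃(y) = y_r^{−m} f(y₁y_r,…,y_{r−1}y_r, y_r,…,yₙ) is a polynomial, and ord₀(f̃) ≤ m at the origin of the chart. Consequently, for an ideal I with ord_Z I = max order = m, the birational transform π_*^{−1} I satisfies max ord (π_*^{−1} I) ≤ m along the exceptional divisor. -/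
/-! In the chart, `x^d` becomes `y^(d + |d|ₛ • eᵣ)`, where `|d|ₛ = d₁ + ⋯ + d_{r-1}` and `eᵣ` is
the exponent of `y_r`. This map on exponents is injective (`|·|ₛ` ignores the `r`-th coordinate),
so no cancellation occurs. As `f ∈ Q^m`, every exponent `d` of `f` has `|d|ₛ + d_r ≥ m`, which is
the `y_r`-degree of its image: hence `y_r^m` divides. As `f ∉ P^(m+1)`, some exponent of `f` has
total degree `≤ m`; its image has degree `≤ 2m`, so after division by `y_r^m` a monomial of degree
`≤ m` survives. -/

open MvPolynomial Finsupp

namespace MvPolynomial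

variable {σ R : Type*}

noncomputable def degreeIn (s : Set σ) : (σ →₀ ℕ) →+ ℕ := weight (s.indicator 1)

section degreeIn

variable {s : Set σ}

theorem degreeIn_single (i : σ) (k : ℕ) [Decidable (i ∈ s)] :
    degreeIn s (single i k) = if i ∈ s then k else 0 := by
  by_cases hi : i ∈ s <;> simp [degreeIn, weight_single, hi]

theorem degreeIn_le_degree (d : σ →₀ ℕ) : degreeIn s d ≤ degree d := by
  classical
  induction d using Finsupp.induction_linear with
  | zero => simp
  | add d₁ d₂ h₁ h₂ => simpa only [map_add] using add_le_add h₁ h₂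
  | single i k => rw [degreeIn_single, degree_single]; split_ifs <;> simp

theorem degreeIn_insert {e : σ} (he : e ∉ s) (d : σ →₀ ℕ) :
    degreeIn (insert e s) d = degreeIn s d + d e := by
  classical
  induction d using Finsupp.induction_linear with
  | zero => simp
  | add d₁ d₂ h₁ h₂ => simp only [map_add, h₁, h₂, Finsupp.add_apply]; ring
  | single i k =>
    rcases eq_or_ne i e with rfl | hie
    · simp [degreeIn_single, he]
    · simp [degreeIn_single, hie, Finsupp.single_eq_of_ne hie.symm]

theorem degreeIn_mono : Monotone (degreeIn s) := fun d d' hle => by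
  rw [← add_tsub_cancel_of_le hle, map_add]
  exact Nat.le_add_right _ _

end degreeIn

theorem le_degreeIn_of_mem_pow_span_X_image [CommSemiring R] {s : Set σ} {m : ℕ}
    {f : MvPolynomial σ R} (hf : f ∈ Ideal.span (X '' s) ^ m) :
    ∀ d ∈ f.support, m ≤ degreeIn s d := by
  classical
  let I (m : ℕ) : Ideal (MvPolynomial σ R) := restrictSupportIdeal R {d | m ≤ degreeIn s d}
    fun _ _ hle hd => hd.trans (degreeIn_mono hle)
  suffices ∀ m, Ideal.span (X '' s) ^ m ≤ I m from (mem_restrictSupport_iff R).1 (this m hf)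
  intro m
  induction m with
  | zero => intro f _ d _; exact Nat.zero_le _
  | succ m ih =>
    rw [pow_succ, Ideal.mul_le]
    intro a ha b hb d hd
    obtain ⟨da, hda, db, hdb, rfl⟩ := Finset.mem_add.1 (support_mul a b hd)
    obtain ⟨i, hi, hdbi⟩ := mem_ideal_span_X_image.1 hb db hdb
    have hb1 : 1 ≤ degreeIn s db :=
      (by simp [degreeIn_single, hi] : 1 ≤ degreeIn s (single i 1)).trans
        (degreeIn_mono (single_le_iff.2 (Nat.one_le_iff_ne_zero.2 hdbi)))
    show m + 1 ≤ degreeIn s (da + db)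
    rw [map_add]
    exact add_le_add ((mem_restrictSupport_iff R).1 (ih ha) hda) hb1

section Chart

variable [CommSemiring R] (s : Set σ) (e : σ)

noncomputable def chartExponent (d : σ →₀ ℕ) : σ →₀ ℕ := d + single e (degreeIn s d)

theorem chartExponent_apply_self (d : σ →₀ ℕ) :
    chartExponent s e d e = d e + degreeIn s d := by
  simp [chartExponent]

theorem degree_chartExponent (d : σ →₀ ℕ) :
    degree (chartExponent s e d) = degree d + degreeIn s d := by
  simp [chartExponent, degree_single]

variable {s e} in
theorem chartExponent_injective (he : e ∉ s) : Function.Injective (chartExponent s e) := by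
  have hS : ∀ d, degreeIn s (chartExponent s e d) = degreeIn s d := fun d => by
    classical
    simp [chartExponent, degreeIn_single, he]
  intro d d' h
  have h' := congrArg (degreeIn s) h
  rw [hS, hS] at h'
  unfold chartExponent at h
  rw [h'] at h
  exact add_right_cancel h

variable [DecidablePred (· ∈ s)]

variable (R) in
noncomputable def blowupChart : σ → MvPolynomial σ R := fun i => if i ∈ s then X i * X e else X i

theorem aeval_blowupChart_monomial (d : σ →₀ ℕ) (c : R) :
    aeval (blowupChart R s e) (monomial d c) = monomial (chartExponent s e d) c := by
  have hfactor : ∀ i ∈ d.support,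
      blowupChart R s e i ^ d i = X i ^ d i * X e ^ degreeIn s (single i (d i)) := by
    intro i _
    by_cases hi : i ∈ s <;> simp [blowupChart, degreeIn_single, hi, mul_pow]
  have hsum : ∑ i ∈ d.support, degreeIn s (single i (d i)) = degreeIn s d := by
    conv_rhs => rw [← d.sum_single]
    rw [map_finsuppSum, Finsupp.sum]
  rw [aeval_monomial, Finsupp.prod, Finset.prod_congr rfl hfactor, Finset.prod_mul_distrib,
    Finset.prod_pow_eq_pow_sum, hsum, prod_X_pow_eq_monomial, X_pow_eq_monomial, monomial_mul,
    algebraMap_eq, C_mul_monomial, one_mul, mul_one]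
  rfl

theorem aeval_blowupChart (f : MvPolynomial σ R) :
    aeval (blowupChart R s e) f = ∑ d ∈ f.support, monomial (chartExponent s e d) (coeff d f) := by
  conv_lhs => rw [f.as_sum]
  simp only [map_sum, aeval_blowupChart_monomial]

variable {s e}

theorem coeff_chartExponent_aeval_blowupChart (he : e ∉ s) (f : MvPolynomial σ R)
    (d : σ →₀ ℕ) : coeff (chartExponent s e d) (aeval (blowupChart R s e) f) = coeff d f := by
  classical
  induction f using MvPolynomial.induction_on' with
  | monomial u r =>
    simp only [aeval_blowupChart_monomial, coeff_monomial, (chartExponent_injective he).eq_iff]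
  | add p q hp hq => simp only [map_add, coeff_add, hp, hq]

theorem le_apply_of_mem_support_aeval_blowupChart {m : ℕ} {f : MvPolynomial σ R}
    (he : e ∉ s) (hf : f ∈ Ideal.span (X '' insert e s) ^ m) :
    ∀ d ∈ (aeval (blowupChart R s e) f).support, m ≤ d e := by
  classical
  intro d hd
  rw [aeval_blowupChart] at hd
  obtain ⟨d₀, hd₀, hd⟩ := Finset.mem_biUnion.1 (support_sum hd)
  rw [Finset.mem_singleton.1 (support_monomial_subset hd), chartExponent_apply_self, add_comm,
    ← degreeIn_insert he]
  exact le_degreeIn_of_mem_pow_span_X_image hf d₀ hd₀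

end Chart

theorem monomial_mul_divMonomial_of_forall_le [CommSemiring R] {x : MvPolynomial σ R}
    {i : σ →₀ ℕ} (h : ∀ d ∈ x.support, i ≤ d) : monomial i 1 * divMonomial x i = x := by
  have hmod : modMonomial x i = 0 := by
    ext d
    by_cases hid : i ≤ d
    · exact coeff_modMonomial_of_le x hid
    · rw [coeff_modMonomial_of_not_le x hid, coeff_zero]
      exact notMem_support_iff.1 fun hd => hid (h d hd)
  simpa [hmod] using divMonomial_add_modMonomial x i

section BirationalTransform

variable [CommSemiring R] {s : Set σ} [DecidablePred (· ∈ s)] {e : σ} {m : ℕ}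

variable (s e m) in
noncomputable def birationalTransform (f : MvPolynomial σ R) : MvPolynomial σ R :=
  divMonomial (aeval (blowupChart R s e) f) (single e m)

theorem aeval_blowupChart_eq_X_pow_mul_birationalTransform {f : MvPolynomial σ R}
    (he : e ∉ s) (hf : f ∈ Ideal.span (X '' insert e s) ^ m) :
    aeval (blowupChart R s e) f = X e ^ m * birationalTransform s e m f := by
  rw [X_pow_eq_monomial, birationalTransform, monomial_mul_divMonomial_of_forall_le]
  exact fun d hd => single_le_iff.2 (le_apply_of_mem_support_aeval_blowupChart he hf d hd)

theorem birationalTransform_notMem_pow_idealOfVars {f : MvPolynomial σ R}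
    (he : e ∉ s) (hf : f ∈ Ideal.span (X '' insert e s) ^ m) {a : σ →₀ ℕ}
    (ha : a ∈ f.support) (ham : degree a ≤ m) :
    birationalTransform s e m f ∉ idealOfVars σ R ^ (m + 1) := by
  have hcoeff := coeff_chartExponent_aeval_blowupChart he f a
  have hsplit : single e m + (chartExponent s e a - single e m) = chartExponent s e a := by
    refine add_tsub_cancel_of_le (single_le_iff.2 ?_)
    refine le_apply_of_mem_support_aeval_blowupChart he hf _ ?_
    rw [mem_support_iff, hcoeff]
    exact mem_support_iff.1 ha
  have hmem : chartExponent s e a - single e m ∈ (birationalTransform s e m f).support := by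
    rw [mem_support_iff, birationalTransform, coeff_divMonomial, hsplit, hcoeff]
    exact mem_support_iff.1 ha
  have hdeg := congrArg degree hsplit
  rw [map_add, degree_single, degree_chartExponent] at hdeg
  have := degreeIn_le_degree (s := s) a
  rw [mem_pow_idealOfVars_iff]
  intro h
  have := h _ hmem
  omega

end BirationalTransform

end MvPolynomial

theorem stmt_14_general {k : Type*} [Field k] (n r m : ℕ)
    (hr1 : 1 ≤ r) (hidx : r - 1 < n)
    (f : MvPolynomial (Fin n) k)
    (P Q : Ideal (MvPolynomial (Fin n) k))
    (hP : P = Ideal.span (Set.range (X : Fin n → MvPolynomial (Fin n) k)))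
    (hQ : Q = Ideal.span {g | ∃ i : Fin n, (i : ℕ) < r ∧ g = X i})
    (hordm' : f ∉ P ^ (m + 1))
    (hZ : f ∈ Q ^ m) :
    ∃ g : MvPolynomial (Fin n) k,
      (aeval (fun i : Fin n => if (i : ℕ) < r - 1
          then X i * X (⟨r - 1, hidx⟩ : Fin n)
          else X i) f
        = X (⟨r - 1, hidx⟩ : Fin n) ^ m * g) ∧
      g ∉ P ^ (m + 1) := by
  let e : Fin n := ⟨r - 1, hidx⟩
  let s : Set (Fin n) := {i | (i : ℕ) < r - 1}
  -- the instance of the `if` in the statement, so that `blowupChart k s e` unfolds to its chart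
  let _ : DecidablePred (· ∈ s) := fun i => Nat.decLt i (r - 1)
  have he : e ∉ s := lt_irrefl (r - 1)
  have hQ' : Q = Ideal.span (X '' insert e s) := by
    rw [hQ]
    congr 1
    ext g
    simp only [Set.mem_ofPred_eq, Set.mem_image, Set.mem_insert_iff, s, e, Fin.ext_iff]
    exact exists_congr fun i => by constructor <;> rintro ⟨hi, rfl⟩ <;> exact ⟨by omega, rfl⟩
  obtain ⟨a, ha, ham⟩ : ∃ a ∈ f.support, degree a ≤ m := by
    rw [hP, mem_pow_idealOfVars_iff] at hordm'
    obtain ⟨a, ha, h⟩ := not_forall₂.1 hordm'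
    exact ⟨a, ha, Nat.le_of_not_lt h⟩
  rw [hQ'] at hZ
  refine ⟨birationalTransform s e m f, ?_, ?_⟩
  · exact (aeval_blowupChart_eq_X_pow_mul_birationalTransform he hZ :)
  · rw [hP]
    exact birationalTransform_notMem_pow_idealOfVars he hZ ha ham

/-- Order does not increase under blow-up of a maximal-order center (local
model).  Let `f ∈ k[x₁,…,xₙ]` have order exactly `m` at the origin
(`P = (x₁,…,xₙ)`), and suppose `f ∈ Q^m` where `Q = (x₁,…,x_r)` is the ideal
of the center `Z` (i.e. `ord_Z f ≥ m`).  In the chart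
`y_j = x_j / x_r (j < r)`, `y_j = x_j (j ≥ r)`, the substituted polynomial is
divisible by `y_r^m`, and the quotient `f̃` (the birational transform) has
order `≤ m` at the origin of the chart, i.e. `f̃ ∉ P^{m+1}`. -/
theorem stmt_14 {k : Type*} [Field k] (n r m : ℕ)
    (hr1 : 1 ≤ r) (hrn : r ≤ n) (hidx : r - 1 < n)
    (f : MvPolynomial (Fin n) k) (hf0 : f ≠ 0)
    (P Q : Ideal (MvPolynomial (Fin n) k))
    (hP : P = Ideal.span (Set.range (X : Fin n → MvPolynomial (Fin n) k)))
    (hQ : Q = Ideal.span {g | ∃ i : Fin n, (i : ℕ) < r ∧ g = X i})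
    (hordm : f ∈ P ^ m) (hordm' : f ∉ P ^ (m + 1))
    (hZ : f ∈ Q ^ m) :
    ∃ g : MvPolynomial (Fin n) k,
      (aeval (fun i : Fin n => if (i : ℕ) < r - 1
          then X i * X (⟨r - 1, hidx⟩ : Fin n)
          else X i) f
        = X (⟨r - 1, hidx⟩ : Fin n) ^ m * g) ∧
      g ∉ P ^ (m + 1) :=
  stmt_14_general n r m hr1 hidx f P Q hP hQ hordm' hZ
end

section
/- Restriction commutes with birational transform of marked ideals (local polynomial model): let H = (x₁ = 0) ⊂ 𝔸ⁿ, Z = (x₁ = ⋯ = x_r = 0) ⊂ H with r ≥ 2, and let (I, m) be a marked ideal with m ≤ ord_Z I and I|_H ≠ 0. In the chart y_j = x_j/x_r (j < r), y_j = x_j (j ≥ r) of the blow-up of Z, one has (π_H)_*^{−1}(I|_H, m) = (π_*^{−1}(I, m))|_{B_Z H}, where B_Z H = (y₁ = 0) is the birational transform of H and the birational transforms are computed by f ↦ y_r^{−m} f(y₁y_r,…,y_{r−1}y_r, y_r,…,yₙ). -/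
open MvPolynomial

/-- The blow-up chart substitution `x_j ↦ y_j·y_r (j < r)`, `x_j ↦ y_j (j ≥ r)`
(indices `0`-based: the `r`-th variable is `X ⟨r−1,_⟩`). -/
noncomputable def blowSub (k : Type*) [Field k] (n r : ℕ) (hidx : r - 1 < n) :
    MvPolynomial (Fin n) k →ₐ[k] MvPolynomial (Fin n) k :=
  aeval (fun i : Fin n => if (i : ℕ) < r - 1
    then X i * X (⟨r - 1, hidx⟩ : Fin n) else X i)

/-- Restriction to the hypersurface `H = (x₁ = 0)`: set the first variable
to `0`. -/
noncomputable def resH (k : Type*) [Field k] (n : ℕ) (h0 : 0 < n) :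
    MvPolynomial (Fin n) k →ₐ[k] MvPolynomial (Fin n) k :=
  aeval (fun i : Fin n => if i = (⟨0, h0⟩ : Fin n) then 0 else X i)

/-- The birational transform of the marked ideal `(I, m)` in the chart: the
ideal generated by all `g` with `σ(f) = y_r^m · g` for `f ∈ I`. -/
noncomputable def birTr {k : Type*} [Field k] (n r m : ℕ) (hidx : r - 1 < n)
    (I : Ideal (MvPolynomial (Fin n) k)) : Ideal (MvPolynomial (Fin n) k) :=
  Ideal.span {g | ∃ f ∈ I, blowSub k n r hidx f
    = X (⟨r - 1, hidx⟩ : Fin n) ^ m * g}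

section Aux

variable {k : Type*} [Field k] {n r m : ℕ}

lemma resH_X_ne (h0 : 0 < n) {i : Fin n} (hi : i ≠ ⟨0, h0⟩) :
    resH k n h0 (X i) = X i := by simp [resH, hi]

lemma resH_X_zero (h0 : 0 < n) : resH k n h0 (X ⟨0, h0⟩) = 0 := by simp [resH]

lemma resH_resH (h0 : 0 < n) (p : MvPolynomial (Fin n) k) :
    resH k n h0 (resH k n h0 p) = resH k n h0 p := by
  have h : (resH k n h0).comp (resH k n h0) = resH k n h0 := by
    apply MvPolynomial.algHom_ext
    intro i
    by_cases hi : i = ⟨0, h0⟩ <;> simp [resH, hi]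
  exact AlgHom.congr_fun h p

lemma resH_comm_blowSub (h0 : 0 < n) (hr2 : 2 ≤ r) (hidx : r - 1 < n)
    (p : MvPolynomial (Fin n) k) :
    resH k n h0 (blowSub k n r hidx p) = blowSub k n r hidx (resH k n h0 p) := by
  have hne : (⟨r - 1, hidx⟩ : Fin n) ≠ ⟨0, h0⟩ := by
    simp only [ne_eq, Fin.mk.injEq]
    omega
  have h : (resH k n h0).comp (blowSub k n r hidx)
      = (blowSub k n r hidx).comp (resH k n h0) := by
    apply MvPolynomial.algHom_ext
    intro i
    by_cases hi : i = ⟨0, h0⟩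
    · subst hi
      have h01 : (0 : ℕ) < r - 1 := by omega
      simp [resH, blowSub, h01, hne]
    · by_cases hlt : (i : ℕ) < r - 1 <;> simp [resH, blowSub, hi, hlt, hne]
  exact AlgHom.congr_fun h p

lemma sub_resH_mem (h0 : 0 < n) (p : MvPolynomial (Fin n) k) :
    p - resH k n h0 p ∈ Ideal.span {(X (⟨0, h0⟩ : Fin n) : MvPolynomial (Fin n) k)} := by
  induction p using MvPolynomial.induction_on with
  | C a => simp [resH]
  | add p q hp hq =>
      have : p + q - resH k n h0 (p + q)
          = (p - resH k n h0 p) + (q - resH k n h0 q) := by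
        rw [map_add]; ring
      rw [this]; exact Ideal.add_mem _ hp hq
  | mul_X p i hp =>
      have heq : p * X i - resH k n h0 (p * X i)
          = (p - resH k n h0 p) * X i
            + resH k n h0 p * (X i - resH k n h0 (X i)) := by
        rw [map_mul]; ring
      rw [heq]
      refine Ideal.add_mem _ (Ideal.mul_mem_right _ _ hp) (Ideal.mul_mem_left _ _ ?_)
      by_cases hi : i = ⟨0, h0⟩
      · subst hi
        rw [resH_X_zero, sub_zero]
        exact Ideal.mem_span_singleton_self _
      · rw [resH_X_ne h0 hi, sub_self]
        exact Ideal.zero_mem _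

lemma map_blowSub_Q_le (hr2 : 2 ≤ r) (hidx : r - 1 < n)
    (Q : Ideal (MvPolynomial (Fin n) k))
    (hQ : Q = Ideal.span {g | ∃ i : Fin n, (i : ℕ) < r ∧ g = X i}) :
    Ideal.map (blowSub k n r hidx).toRingHom Q
      ≤ Ideal.span {(X (⟨r - 1, hidx⟩ : Fin n) : MvPolynomial (Fin n) k)} := by
  rw [hQ, Ideal.map_span, Ideal.span_le]
  rintro _ ⟨g, ⟨i, hir, rfl⟩, rfl⟩
  by_cases hlt : (i : ℕ) < r - 1
  · have : (blowSub k n r hidx).toRingHom (X i)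
        = X i * X (⟨r - 1, hidx⟩ : Fin n) := by simp [blowSub, hlt]
    rw [this]
    exact Ideal.mul_mem_left _ _ (Ideal.mem_span_singleton_self _)
  · have hi : i = (⟨r - 1, hidx⟩ : Fin n) := by
      apply Fin.ext; simp; omega
    have : (blowSub k n r hidx).toRingHom (X i) = X (⟨r - 1, hidx⟩ : Fin n) := by
      subst hi; simp [blowSub]
    rw [this]
    exact Ideal.mem_span_singleton_self _

lemma blowSub_dvd (hr2 : 2 ≤ r) (hidx : r - 1 < n)
    (Q : Ideal (MvPolynomial (Fin n) k))
    (hQ : Q = Ideal.span {g | ∃ i : Fin n, (i : ℕ) < r ∧ g = X i})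
    {f : MvPolynomial (Fin n) k} (hf : f ∈ Q ^ m) :
    ∃ g, blowSub k n r hidx f = X (⟨r - 1, hidx⟩ : Fin n) ^ m * g := by
  have h1 : blowSub k n r hidx f
      ∈ Ideal.map (blowSub k n r hidx).toRingHom (Q ^ m) :=
    Ideal.mem_map_of_mem _ hf
  rw [Ideal.map_pow] at h1
  have h2 : Ideal.map (blowSub k n r hidx).toRingHom Q ^ m
      ≤ Ideal.span {(X (⟨r - 1, hidx⟩ : Fin n) : MvPolynomial (Fin n) k)} ^ m :=
    Ideal.pow_right_mono (map_blowSub_Q_le hr2 hidx Q hQ) m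
  have h3 := h2 h1
  rw [Ideal.span_singleton_pow, Ideal.mem_span_singleton] at h3
  obtain ⟨g, hg⟩ := h3
  exact ⟨g, hg⟩

lemma map_resH_le_Qpow (h0 : 0 < n)
    (I Q : Ideal (MvPolynomial (Fin n) k))
    (hQ : Q = Ideal.span {g | ∃ i : Fin n, (i : ℕ) < r ∧ g = X i})
    (hord : I ≤ Q ^ m) :
    Ideal.map (resH k n h0).toRingHom I ≤ Q ^ m := by
  calc Ideal.map (resH k n h0).toRingHom I
      ≤ Ideal.map (resH k n h0).toRingHom (Q ^ m) := Ideal.map_mono hord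
    _ = Ideal.map (resH k n h0).toRingHom Q ^ m := Ideal.map_pow _ _ _
    _ ≤ Q ^ m := by
        refine Ideal.pow_right_mono ?_ m
        rw [hQ, Ideal.map_span, Ideal.span_le]
        rintro _ ⟨g, ⟨i, hir, rfl⟩, rfl⟩
        by_cases hi : i = ⟨0, h0⟩
        · subst hi
          have : (resH k n h0).toRingHom (X ⟨0, h0⟩)
              = (0 : MvPolynomial (Fin n) k) := resH_X_zero h0
          rw [this]; exact Ideal.zero_mem _
        · have : (resH k n h0).toRingHom (X i) = X i := resH_X_ne h0 hi
          rw [this]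
          exact Ideal.subset_span ⟨i, hir, rfl⟩

lemma exists_rep (h0 : 0 < n) (I : Ideal (MvPolynomial (Fin n) k))
    {f' : MvPolynomial (Fin n) k}
    (hf' : f' ∈ Ideal.map (resH k n h0).toRingHom I) :
    ∃ h ∈ I, resH k n h0 f' = resH k n h0 h := by
  rw [Ideal.map] at hf'
  refine Submodule.span_induction ?_ ?_ ?_ ?_ hf'
  · rintro _ ⟨f, hf, rfl⟩
    exact ⟨f, hf, resH_resH h0 f⟩
  · exact ⟨0, I.zero_mem, by simp⟩
  · rintro x y - - ⟨hx, hxI, hhx⟩ ⟨hy, hyI, hhy⟩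
    exact ⟨hx + hy, I.add_mem hxI hyI, by rw [map_add, map_add, hhx, hhy]⟩
  · rintro c x - ⟨h, hI, hh⟩
    refine ⟨resH k n h0 c * h, I.mul_mem_left _ hI, ?_⟩
    have : (c • x : MvPolynomial (Fin n) k) = c * x := rfl
    rw [this, map_mul, map_mul, hh, resH_resH]

end Aux

/-- Restriction commutes with the birational transform of marked ideals (local
polynomial model): for `H = (x₁ = 0)`, `Z = (x₁ = ⋯ = x_r = 0)` with `r ≥ 2`,
and `(I, m)` with `m ≤ ord_Z I` (i.e. `I ⊆ Q^m`) and `I|_H ≠ 0`, the transform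
of the restriction agrees with the restriction of the transform, as ideals of
`k[y₁,…,yₙ]/(y₁)` (the birational transform `B_Z H = (y₁ = 0)` of `H`). -/
theorem stmt_15 {k : Type*} [Field k] (n r m : ℕ)
    (h0 : 0 < n) (hr2 : 2 ≤ r) (hrn : r ≤ n) (hidx : r - 1 < n)
    (I : Ideal (MvPolynomial (Fin n) k))
    (Q : Ideal (MvPolynomial (Fin n) k))
    (hQ : Q = Ideal.span {g | ∃ i : Fin n, (i : ℕ) < r ∧ g = X i})
    (hord : I ≤ Q ^ m)
    (hres : Ideal.map (resH k n h0).toRingHom I ≠ ⊥) :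
    Ideal.map (Ideal.Quotient.mk (Ideal.span {(X (⟨0, h0⟩ : Fin n) : MvPolynomial (Fin n) k)}))
        (birTr n r m hidx (Ideal.map (resH k n h0).toRingHom I))
      = Ideal.map (Ideal.Quotient.mk (Ideal.span {(X (⟨0, h0⟩ : Fin n) : MvPolynomial (Fin n) k)}))
        (birTr n r m hidx I) := by
  set x0 : MvPolynomial (Fin n) k := X (⟨0, h0⟩ : Fin n) with hx0
  set xr : MvPolynomial (Fin n) k := X (⟨r - 1, hidx⟩ : Fin n) with hxr
  set J := Ideal.map (resH k n h0).toRingHom I with hJ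
  have hxrne : resH k n h0 xr = xr := by
    refine resH_X_ne h0 ?_
    simp only [ne_eq, Fin.mk.injEq]
    omega
  have hxrpow : (xr : MvPolynomial (Fin n) k) ^ m ≠ 0 :=
    pow_ne_zero _ (MvPolynomial.X_ne_zero _)
  have hmk : ∀ g : MvPolynomial (Fin n) k,
      Ideal.Quotient.mk (Ideal.span {x0}) g
        = Ideal.Quotient.mk (Ideal.span {x0}) (resH k n h0 g) := by
    intro g
    rw [Ideal.Quotient.eq]
    exact sub_resH_mem h0 g
  apply le_antisymm
  · rw [Ideal.map_le_iff_le_comap, birTr, Ideal.span_le]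
    rintro g ⟨f', hf', hσ⟩
    obtain ⟨h, hI, hh⟩ := exists_rep h0 I hf'
    obtain ⟨gh, hgh⟩ := blowSub_dvd hr2 hidx Q hQ (hord hI)
    have key : resH k n h0 g = resH k n h0 gh := by
      have e1 : blowSub k n r hidx (resH k n h0 f') = xr ^ m * resH k n h0 g := by
        rw [← resH_comm_blowSub h0 hr2 hidx, hσ, map_mul, map_pow, hxrne]
      have e2 : blowSub k n r hidx (resH k n h0 f') = xr ^ m * resH k n h0 gh := by
        rw [hh, ← resH_comm_blowSub h0 hr2 hidx, hgh, map_mul, map_pow, hxrne]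
      exact mul_left_cancel₀ hxrpow (e1.symm.trans e2)
    show Ideal.Quotient.mk (Ideal.span {x0}) g
        ∈ Ideal.map (Ideal.Quotient.mk (Ideal.span {x0})) (birTr n r m hidx I)
    rw [hmk g, key, ← hmk gh]
    exact Ideal.mem_map_of_mem _ (Ideal.subset_span ⟨h, hI, hgh⟩)
  · rw [Ideal.map_le_iff_le_comap, birTr, Ideal.span_le]
    rintro g ⟨f, hf, hσ⟩
    have hρf : resH k n h0 f ∈ J := Ideal.mem_map_of_mem _ hf
    have e1 : blowSub k n r hidx (resH k n h0 f) = xr ^ m * resH k n h0 g := by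
      rw [← resH_comm_blowSub h0 hr2 hidx, hσ, map_mul, map_pow, hxrne]
    show Ideal.Quotient.mk (Ideal.span {x0}) g
        ∈ Ideal.map (Ideal.Quotient.mk (Ideal.span {x0})) (birTr n r m hidx J)
    rw [hmk g]
    exact Ideal.mem_map_of_mem _ (Ideal.subset_span ⟨resH k n h0 f, hρf, e1⟩)
end

section
/- In characteristic zero, D^r(I) coincides with the ideal generated by I and all partial derivatives of elements of I of order ≤ r. Concretely, for R = k[x₁,…,xₙ] with char k = 0 and an ideal I: the ideal generated by { ∂^{|α|}f/∂x^α : f ∈ I, |α| ≤ r } equals the inductively defined D^r(I) (where D(J) is generated by J and first partials of elements of J). The proof for r = 2 uses identities such as ∂f/∂y = ∂²(xf)/∂y∂x − x·∂²f/∂y∂x and 2·∂f/∂x = ∂²(xf)/∂x² − x·∂²f/∂x². -/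
/-- The derivative ideal `D(I)`: generated by `I` and all first partials of
elements of `I`. -/
noncomputable def Dop {k : Type*} [CommRing k] {n : ℕ}
    (I : Ideal (MvPolynomial (Fin n) k)) : Ideal (MvPolynomial (Fin n) k) :=
  I ⊔ Ideal.span {g | ∃ f ∈ I, ∃ i : Fin n, g = MvPolynomial.pderiv i f}

/-- A partial derivative of an element of `span S` lies in the span of `S`
together with partial derivatives of elements of `S`. -/
lemma pderiv_mem_span {k : Type*} [CommRing k] {n : ℕ}
    (S : Set (MvPolynomial (Fin n) k)) (i : Fin n) {f : MvPolynomial (Fin n) k}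
    (hf : f ∈ Ideal.span S) :
    MvPolynomial.pderiv i f ∈
      Ideal.span (S ∪ (MvPolynomial.pderiv i '' S)) := by
  refine Submodule.span_induction ?_ ?_ ?_ ?_ hf
  · intro x hx
    exact Ideal.subset_span (Or.inr ⟨x, hx, rfl⟩)
  · simp
  · intro x y _ _ hx hy
    rw [map_add]; exact Ideal.add_mem _ hx hy
  · intro a x hxS hx
    rw [smul_eq_mul, MvPolynomial.pderiv_mul]
    refine Ideal.add_mem _ ?_ (Ideal.mul_mem_left _ _ hx)
    exact Ideal.mul_mem_left _ _
      (Ideal.span_mono Set.subset_union_left hxS)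

/-- In characteristic zero, the inductively defined `D^r(I)` equals the ideal
generated by `I` and all iterated partial derivatives of elements of `I` of
order at most `r`. -/
theorem stmt_18 {k : Type*} [Field k] [CharZero k] {n : ℕ}
    (I : Ideal (MvPolynomial (Fin n) k)) (r : ℕ) :
    Ideal.span {g | ∃ f ∈ I, ∃ l : List (Fin n), l.length ≤ r ∧
        g = l.foldr (fun i h => MvPolynomial.pderiv i h) f}
      = Dop^[r] I := by
  induction r with
  | zero =>
      simp only [Function.iterate_zero, id]
      have : {g | ∃ f ∈ I, ∃ l : List (Fin n), l.length ≤ 0 ∧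
          g = l.foldr (fun i h => MvPolynomial.pderiv i h) f} = (I : Set _) := by
        ext g
        constructor
        · rintro ⟨f, hf, l, hl, rfl⟩
          rw [List.length_eq_zero_iff.mp (Nat.le_zero.mp hl)]
          exact hf
        · intro hg
          exact ⟨g, hg, [], le_refl _, rfl⟩
      rw [this, Ideal.span_eq]
  | succ r ih =>
      rw [Function.iterate_succ_apply', ← ih]
      set Pr := {g | ∃ f ∈ I, ∃ l : List (Fin n), l.length ≤ r ∧
          g = l.foldr (fun i h => MvPolynomial.pderiv i h) f} with hPr
      apply le_antisymm
      · -- span P^{r+1} ≤ Dop (span P^r)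
        rw [Ideal.span_le]
        rintro g ⟨f, hf, l, hl, rfl⟩
        cases l with
        | nil =>
            rw [Dop]
            exact Ideal.mem_sup_left (Ideal.subset_span ⟨f, hf, [], Nat.zero_le _, rfl⟩)
        | cons i l' =>
            have hl' : l'.length ≤ r := Nat.lt_succ_iff.mp (Nat.lt_of_lt_of_le (Nat.lt_succ_self _) hl)
            have hmem : l'.foldr (fun i h => MvPolynomial.pderiv i h) f ∈ Ideal.span Pr :=
              Ideal.subset_span ⟨f, hf, l', hl', rfl⟩
            rw [Dop]
            exact Ideal.mem_sup_right (Ideal.subset_span ⟨_, hmem, i, rfl⟩)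
      · -- Dop (span P^r) ≤ span P^{r+1}
        rw [Dop, sup_le_iff]
        constructor
        · rw [Ideal.span_le]
          rintro g ⟨f, hf, l, hl, rfl⟩
          exact Ideal.subset_span ⟨f, hf, l, Nat.le_succ_of_le hl, rfl⟩
        · rw [Ideal.span_le]
          rintro g ⟨f, hf, i, rfl⟩
          have := pderiv_mem_span Pr i hf
          refine Ideal.span_le.mpr ?_ (this)
          rintro x (⟨f', hf', l, hl, rfl⟩ | ⟨y, ⟨f', hf', l, hl, rfl⟩, rfl⟩)
          · exact Ideal.subset_span ⟨f', hf', l, Nat.le_succ_of_le hl, rfl⟩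
          · exact Ideal.subset_span ⟨f', hf', i :: l, Nat.succ_le_succ hl, rfl⟩
end

section
/- A D-balanced ideal has order exactly m or 0 at every point: let k have characteristic zero, R = k[x₁,…,xₙ] (or its localizations), and let I be an ideal with maximal order m (i.e., max over points p of ord_p I equals m). Assume I is D-balanced: (D^i I)^m ⊆ I^{m−i} for all 0 < i < m. Then for every point p, ord_p I ∈ {0, m}. -/
/-- The maximal ideal of the point `p ∈ 𝔸ⁿ(k)`: generated by `xᵢ − pᵢ`. -/
noncomputable def mIdeal {k : Type*} [CommRing k] {n : ℕ} (p : Fin n → k) :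
    Ideal (MvPolynomial (Fin n) k) :=
  Ideal.span (Set.range fun i : Fin n => MvPolynomial.X i - MvPolynomial.C (p i))

/-!
If `I ⊆ 𝔪_p`, the `D`-balanced condition with `i = m - 1` gives `(D^{m-1} I)^m ⊆ I ⊆ 𝔪_p`, so
`D^{m-1} I ⊆ 𝔪_p` because `𝔪_p` is prime. In characteristic zero, `f ∈ 𝔪_p` with all
`∂ᵢ f ∈ 𝔪_p^s` forces `f ∈ 𝔪_p^{s+1}` (translate `p` to the origin and compare coefficients);
climbing from `D^{m-1} I ⊆ 𝔪_p` through `D^j I ⊆ 𝔪_p^{m-j}` gives `I ⊆ 𝔪_p^m`.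
-/

open MvPolynomial

namespace MvPolynomial

variable {σ R : Type*} [CommRing R]

theorem idealOfVars_eq_ker_constantCoeff :
    idealOfVars σ R = RingHom.ker (constantCoeff : MvPolynomial σ R →+* R) := by
  ext f
  rw [RingHom.mem_ker, ← pow_one (idealOfVars σ R), mem_pow_idealOfVars_iff']
  simp [Finsupp.degree_eq_zero_iff, constantCoeff_eq]

instance idealOfVars_isPrime [IsDomain R] : (idealOfVars σ R).IsPrime := by
  rw [idealOfVars_eq_ker_constantCoeff]
  exact RingHom.ker_isPrime _

/-- Writing `x = y + eᵢ`, `coeff y (∂ᵢ f) = (yᵢ + 1) • coeff x f`, and the factor can be cancelled. -/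
theorem mem_pow_idealOfVars_succ_of_pderiv [IsAddTorsionFree R] {s : ℕ} {f : MvPolynomial σ R}
    (hf : f ∈ idealOfVars σ R) (hD : ∀ i, pderiv i f ∈ idealOfVars σ R ^ s) :
    f ∈ idealOfVars σ R ^ (s + 1) := by
  rw [mem_pow_idealOfVars_iff']
  intro x hx
  obtain rfl | ⟨i, hi⟩ := eq_or_ne x 0 |>.imp id Finsupp.ne_iff.mp
  · rwa [idealOfVars_eq_ker_constantCoeff, RingHom.mem_ker, constantCoeff_eq] at hf
  obtain ⟨y, rfl⟩ : ∃ y, x = y + Finsupp.single i 1 :=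
    ⟨x - Finsupp.single i 1, (tsub_add_cancel_of_le
      (Finsupp.single_le_iff.mpr (Nat.one_le_iff_ne_zero.mpr hi))).symm⟩
  have hy : y.degree < s := by simpa using hx
  have h := (mem_pow_idealOfVars_iff' s _).mp (hD i) y hy
  rw [coeff_pderiv, ← Nat.cast_add_one, mul_comm, ← nsmul_eq_mul] at h
  exact nsmul_right_injective (Nat.succ_ne_zero _) (h.trans (smul_zero _).symm)

noncomputable def translateVars (c : σ → R) : MvPolynomial σ R ≃ₐ[R] MvPolynomial σ R :=
  AlgEquiv.ofAlgHom (aeval fun i => X i + C (c i)) (aeval fun i => X i - C (c i))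
    (by ext; simp) (by ext; simp)

@[simp]
theorem translateVars_X (c : σ → R) (i : σ) : translateVars c (X i) = X i + C (c i) :=
  aeval_X _ _

@[simp]
theorem translateVars_C (c : σ → R) (a : R) : translateVars c (C a) = C a :=
  (translateVars c).commutes a

theorem pderiv_translateVars (c : σ → R) (j : σ) (f : MvPolynomial σ R) :
    pderiv j (translateVars c f) = translateVars c (pderiv j f) := by
  classical
  induction f using MvPolynomial.induction_on with
  | C a => simp
  | add f g ihf ihg => simp only [map_add, ihf, ihg]
  | mul_X f i ih =>
    simp only [map_mul, translateVars_X, pderiv_mul, ih, map_add, pderiv_X, pderiv_C, add_zero]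
    by_cases h : j = i <;> simp [h]

end MvPolynomial

section Point

variable {k : Type*} [CommRing k] {n : ℕ}

theorem map_translateVars_mIdeal (p : Fin n → k) :
    (mIdeal p).map (translateVars p) = idealOfVars (Fin n) k := by
  rw [mIdeal, Ideal.map_span, ← Set.range_comp]
  congr 1
  ext
  simp

theorem mem_mIdeal_pow_iff (p : Fin n → k) (s : ℕ) (f : MvPolynomial (Fin n) k) :
    f ∈ mIdeal p ^ s ↔ translateVars p f ∈ idealOfVars (Fin n) k ^ s := by
  rw [← map_translateVars_mIdeal, ← Ideal.map_pow]
  exact (Ideal.apply_mem_of_equiv_iff (f := (translateVars p).toRingEquiv)).symm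

theorem mem_mIdeal_iff (p : Fin n → k) (f : MvPolynomial (Fin n) k) :
    f ∈ mIdeal p ↔ translateVars p f ∈ idealOfVars (Fin n) k := by
  simpa using mem_mIdeal_pow_iff p 1 f

instance mIdeal_isPrime [IsDomain k] (p : Fin n → k) : (mIdeal p).IsPrime := by
  rw [show mIdeal p = (idealOfVars (Fin n) k).comap (translateVars p) from
    Ideal.ext (mem_mIdeal_iff p)]
  exact Ideal.comap_isPrime _ _

theorem mem_mIdeal_pow_succ_of_pderiv [IsAddTorsionFree k] {p : Fin n → k} {s : ℕ}
    {f : MvPolynomial (Fin n) k} (hf : f ∈ mIdeal p) (hD : ∀ i, pderiv i f ∈ mIdeal p ^ s) :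
    f ∈ mIdeal p ^ (s + 1) := by
  simp only [mem_mIdeal_pow_iff, ← pderiv_translateVars] at hD ⊢
  exact mem_pow_idealOfVars_succ_of_pderiv ((mem_mIdeal_iff p f).mp hf) hD

theorem le_mIdeal_pow_succ_of_Dop_le [IsAddTorsionFree k] {p : Fin n → k} {s : ℕ} (hs : s ≠ 0)
    {J : Ideal (MvPolynomial (Fin n) k)} (h : Dop J ≤ mIdeal p ^ s) :
    J ≤ mIdeal p ^ (s + 1) := fun f hf =>
  mem_mIdeal_pow_succ_of_pderiv (Ideal.pow_le_self hs (h (Ideal.mem_sup_left hf)))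
    fun i => h (Ideal.mem_sup_right (Ideal.subset_span ⟨f, hf, i, rfl⟩))

theorem le_mIdeal_pow_of_iterate_Dop_le [IsAddTorsionFree k] {p : Fin n → k} (t : ℕ)
    {J : Ideal (MvPolynomial (Fin n) k)} (h : Dop^[t] J ≤ mIdeal p) :
    J ≤ mIdeal p ^ (t + 1) := by
  induction t generalizing J with
  | zero => simpa using h
  | succ t ih =>
    rw [Function.iterate_succ_apply] at h
    exact le_mIdeal_pow_succ_of_Dop_le t.succ_ne_zero (ih h)

end Point

theorem stmt_19_general {k : Type*} [Field k] [CharZero k] {n : ℕ}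
    (I : Ideal (MvPolynomial (Fin n) k)) (m : ℕ)
    (hDbal : ∀ i : ℕ, 0 < i → i < m → (Dop^[i] I) ^ m ≤ I ^ (m - i)) :
    ∀ p : Fin n → k, I ≤ mIdeal p ^ m ∨ ¬ I ≤ mIdeal p := by
  intro p
  by_cases hIp : I ≤ mIdeal p
  · left
    obtain _ | t := m
    · simp
    have hD : Dop^[t] I ≤ mIdeal p := by
      obtain rfl | ht := t.eq_zero_or_pos
      · exact hIp
      refine (mIdeal_isPrime p).le_of_pow_le (n := t + 1) ((hDbal t ht t.lt_succ_self).trans ?_)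
      simpa using hIp
    exact le_mIdeal_pow_of_iterate_Dop_le t hD
  · exact Or.inr hIp

/-- A `D`-balanced ideal has order exactly `m` or `0` at every point: if `I` has
maximal order `m` (order `≤ m` at every point and `= m` at some point) and is
`D`-balanced, `(D^i I)^m ⊆ I^{m−i}` for `0 < i < m`, then at every point `p`
either `ord_p I ≥ m` or `ord_p I = 0`. -/
theorem stmt_19 {k : Type*} [Field k] [CharZero k] {n : ℕ}
    (I : Ideal (MvPolynomial (Fin n) k)) (m : ℕ) (hm : 1 ≤ m)
    (hmax₁ : ∃ p : Fin n → k, I ≤ mIdeal p ^ m)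
    (hmax₂ : ∀ p : Fin n → k, ¬ I ≤ mIdeal p ^ (m + 1))
    (hDbal : ∀ i : ℕ, 0 < i → i < m → (Dop^[i] I) ^ m ≤ I ^ (m - i)) :
    ∀ p : Fin n → k, I ≤ mIdeal p ^ m ∨ ¬ I ≤ mIdeal p :=
  stmt_19_general I m hDbal
end
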